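/- Let $R$ be a commutative ring and $I$ an ideal of $R$. The real radical $rad_<(I) := \{f \in R : f^{2m} + s \in I \text{ for some } m \in \mathbb{N} \text{ and some sum of squares } s\}$ is the smallest real ideal of $R$ containing $I$. -/

import Mathlib

/-!
Write `x ≤ 0 mod I` when `x + s ∈ I` for some sum of squares `s`; then `f` lies in the real
radical iff `f ^ (2m) ≤ 0 mod I` for some `m`. This relation is stable under sums and under
multiplication by sums of squares, and the identity `4 p x = (p + 1)² x - (p - 1)² x` shows
that if `x` is a sum of squares with `x ≤ 0 mod I` then `4 p x ≤ 0 mod I` for every `p`. For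
`a, b` in the real radical, a power of `a + b` lies in the ideal generated by even powers of `a`
and `b`, which gives closure under addition. Realness follows by expanding `(a² + r) ^ n`
modulo sums of squares, and minimality because real ideals are radical.
-/

theorem IsSumSq.exists_eq_sum_sq {R : Type*} [Semiring R] {s : R} (hs : IsSumSq s) :
    ∃ (n : ℕ) (u : Fin n → R), ∑ i, u i ^ 2 = s := by
  induction hs with
  | zero => exact ⟨0, ![], by simp⟩
  | @sq_add a s _ ih =>
    obtain ⟨n, u, rfl⟩ := ih
    exact ⟨n + 1, Fin.cons a u, by simp [Fin.sum_univ_succ, sq]⟩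

theorem IsSumSq.exists_add_pow_eq {R : Type*} [CommSemiring R] {x r : R} (hx : IsSumSq x)
    (hr : IsSumSq r) (n : ℕ) : ∃ t, IsSumSq t ∧ (x + r) ^ n = x ^ n + t := by
  induction n with
  | zero => exact ⟨0, .zero, by simp⟩
  | succ n ih =>
    obtain ⟨t, ht, hn⟩ := ih
    refine ⟨x ^ n * r + t * (x + r), ?_, by rw [pow_succ, hn]; ring⟩
    have hpow : IsSumSq (x ^ n) := by simpa using IsSumSq.prod (fun _ _ => hx) (I := .range n)
    exact (hpow.mul hr).add (ht.mul (hx.add hr))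

namespace Ideal

variable {R : Type*} [CommRing R]

def IsReal (J : Ideal R) : Prop :=
  ∀ a s : R, IsSumSq s → a ^ 2 + s ∈ J → a ∈ J

theorem isReal_iff_forall_fin (J : Ideal R) :
    J.IsReal ↔ ∀ (n : ℕ) (u : Fin n → R), (∑ i, u i ^ 2) ∈ J → ∀ i, u i ∈ J := by
  constructor
  · intro hJ n u hu i
    rw [← Finset.add_sum_erase _ _ (Finset.mem_univ i)] at hu
    exact hJ _ _ (IsSumSq.sum_sq _ _) hu
  · intro hJ a s hs ha
    obtain ⟨n, u, rfl⟩ := hs.exists_eq_sum_sq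
    exact hJ (n + 1) (Fin.cons a u) (by simpa [Fin.sum_univ_succ] using ha) 0

theorem IsReal.isRadical {J : Ideal R} (hJ : J.IsReal) : J.IsRadical :=
  (isRadical_iff_pow_one_lt 2 one_lt_two).2 fun a ha => hJ a 0 .zero (by simpa using ha)

def IsNonposMod (I : Ideal R) (x : R) : Prop :=
  ∃ s, IsSumSq s ∧ x + s ∈ I

namespace IsNonposMod

variable {I : Ideal R} {x y z : R}

theorem of_mem (hx : x ∈ I) : I.IsNonposMod x :=
  ⟨0, .zero, by simpa using hx⟩

theorem neg_of_isSumSq (hx : IsSumSq x) : I.IsNonposMod (-x) :=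
  ⟨x, hx, by simp⟩

theorem add (hx : I.IsNonposMod x) (hy : I.IsNonposMod y) : I.IsNonposMod (x + y) := by
  obtain ⟨s, hs, hxs⟩ := hx
  obtain ⟨t, ht, hyt⟩ := hy
  exact ⟨s + t, hs.add ht, by simpa only [add_add_add_comm] using I.add_mem hxs hyt⟩

theorem of_add_isSumSq (h : I.IsNonposMod (x + y)) (hy : IsSumSq y) : I.IsNonposMod x := by
  obtain ⟨s, hs, hmem⟩ := h
  exact ⟨y + s, hy.add hs, by rwa [← add_assoc]⟩

theorem isSumSq_mul (hy : IsSumSq y) (hx : I.IsNonposMod x) : I.IsNonposMod (y * x) := by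
  obtain ⟨s, hs, hxs⟩ := hx
  exact ⟨y * s, hy.mul hs, by simpa only [mul_add] using I.mul_mem_left y hxs⟩

theorem four_mul_mul (hx : I.IsNonposMod x) (hxs : IsSumSq x) (p : R) :
    I.IsNonposMod (4 * (p * x)) := by
  have h := (isSumSq_mul (IsSquare.sq (p + 1)).isSumSq hx).add
    (neg_of_isSumSq ((IsSquare.sq (p - 1)).isSumSq.mul hxs))
  convert h using 1
  ring

theorem of_mem_span_pair (hx : I.IsNonposMod x) (hxs : IsSumSq x) (hy : I.IsNonposMod y)
    (hys : IsSumSq y) (hz : z ∈ span {x, y}) (hzs : IsSumSq z) : I.IsNonposMod z := by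
  obtain ⟨p, q, rfl⟩ := mem_span_pair.1 hz
  have h4 := (hx.four_mul_mul hxs p).add (hy.four_mul_mul hys q)
  refine of_add_isSumSq (y := 3 * (p * x + q * y)) ?_ ((IsSumSq.natCast 3).mul hzs)
  convert h4 using 1
  ring

theorem pow_two_mul_of_le {a : R} {m n : ℕ} (h : I.IsNonposMod (a ^ (2 * m))) (hmn : m ≤ n) :
    I.IsNonposMod (a ^ (2 * n)) := by
  have h' := isSumSq_mul (IsSquare.sq (a ^ (n - m))).isSumSq h
  rwa [← pow_mul, ← pow_add, show (n - m) * 2 + 2 * m = 2 * n by omega] at h'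

theorem exists_pow_two_mul_add {a b : R} {m n : ℕ} (ha : I.IsNonposMod (a ^ (2 * m)))
    (hb : I.IsNonposMod (b ^ (2 * n))) : ∃ N, I.IsNonposMod ((a + b) ^ (2 * N)) := by
  have hsq (c : R) (k : ℕ) : IsSumSq (c ^ (2 * k)) := by
    simpa only [pow_mul'] using (IsSquare.sq (c ^ k)).isSumSq
  set k := m + n
  have hrad : a + b ∈ (span {a ^ (2 * k), b ^ (2 * k)}).radical :=
    add_mem ⟨2 * k, subset_span (by simp)⟩ ⟨2 * k, subset_span (by simp)⟩
  obtain ⟨N, hN⟩ := hrad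
  have hN2 : (a + b) ^ (2 * N) ∈ span {a ^ (2 * k), b ^ (2 * k)} :=
    (span _).pow_mem_of_pow_mem hN (by omega)
  exact ⟨N, of_mem_span_pair (ha.pow_two_mul_of_le (by omega)) (hsq a k)
    (hb.pow_two_mul_of_le (by omega)) (hsq b k) hN2 (hsq _ N)⟩

end IsNonposMod

def realRadical (I : Ideal R) : Ideal R where
  carrier := {f | ∃ m : ℕ, I.IsNonposMod (f ^ (2 * m))}
  zero_mem' := ⟨1, .of_mem (by simp)⟩
  add_mem' := fun ⟨_, ha⟩ ⟨_, hb⟩ => ha.exists_pow_two_mul_add hb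
  smul_mem' c f := fun ⟨m, hf⟩ =>
    ⟨m, by simpa only [smul_eq_mul, mul_pow, pow_mul'] using
      hf.isSumSq_mul (IsSquare.sq (c ^ m)).isSumSq⟩

variable (I : Ideal R)

theorem coe_realRadical :
    (I.realRadical : Set R) = {f | ∃ (m : ℕ) (s : R), IsSumSq s ∧ f ^ (2 * m) + s ∈ I} :=
  rfl

theorem le_realRadical : I ≤ I.realRadical :=
  fun _ hf => ⟨1, .of_mem (I.pow_mem_of_mem hf _ (by norm_num))⟩

theorem isReal_realRadical : I.realRadical.IsReal := by
  rintro a r hr ⟨m, hm⟩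
  obtain ⟨t, ht, hexp⟩ := (IsSquare.sq a).isSumSq.exists_add_pow_eq hr (2 * m)
  rw [hexp, ← pow_mul] at hm
  exact ⟨2 * m, hm.of_add_isSumSq ht⟩

theorem IsReal.realRadical_le {I K : Ideal R} (hK : K.IsReal) (hIK : I ≤ K) :
    I.realRadical ≤ K := by
  rintro f ⟨m, s, hs, hmem⟩
  have hfm : f ^ m ∈ K := hK _ s hs (by simpa only [← pow_mul'] using hIK hmem)
  exact hK.isRadical ⟨m, hfm⟩

end Ideal

/-- The real radical of an ideal `I` is the smallest real ideal containing `I`. -/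
theorem stmt_8 (R : Type*) [CommRing R] (I : Ideal R) :
    ∃ J : Ideal R,
      (↑J = {f : R | ∃ (m : ℕ) (s : R), IsSumSq s ∧ f ^ (2 * m) + s ∈ I}) ∧
      (∀ (n : ℕ) (u : Fin n → R), (∑ i, u i ^ 2) ∈ J → ∀ i, u i ∈ J) ∧
      I ≤ J ∧
      ∀ K : Ideal R,
        (∀ (n : ℕ) (u : Fin n → R), (∑ i, u i ^ 2) ∈ K → ∀ i, u i ∈ K) →
        I ≤ K → J ≤ K :=
  ⟨I.realRadical, I.coe_realRadical, (Ideal.isReal_iff_forall_fin _).1 I.isReal_realRadical,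
    I.le_realRadical, fun K hK hIK => ((Ideal.isReal_iff_forall_fin K).2 hK).realRadical_le hIK⟩
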